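/- arXiv:math/0005090 — 2 statements merged into one kernel-verified Lean document; each statement's English description precedes it below -/
import Mathlib

section
/- The Casimir element C = Σ_{w ∈ S_n} q^{-l(w)} T_w ⊗ T_{w^{-1}} in H_n ⊗ H_n^{op} is central in the sense that for every generator T_i, Σ_w q^{-l(w)} T_i T_w ⊗ T_{w^{-1}} = Σ_w q^{-l(w)} T_w ⊗ T_{w^{-1}} T_i. -/
open scoped TensorProduct

/-- The Coxeter length of a permutation of `Fin n`: the minimal length of a word
in the adjacent transpositions `(i, i+1)` expressing it. -/
noncomputable def permLength {n : ℕ} (w : Equiv.Perm (Fin n)) : ℕ :=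
  sInf {k : ℕ | ∃ l : List (Equiv.Perm (Fin n)),
    l.length = k ∧
    (∀ s ∈ l, ∃ (i : Fin n) (h : (i : ℕ) + 1 < n), s = Equiv.swap i ⟨(i : ℕ) + 1, h⟩) ∧
    l.prod = w}

/-!
Let `s = (i, i+1)` and let `F w`, `G w` be the `w`-th summands of the two sides. Left
multiplication by `s` is a fixed-point-free involution of `S_n` that changes the length by exactly
one, because it flips the sign `(-1) ^ l(w)`. If `l(sw) = l(w) + 1`, then `T_s T_w = T_{sw}` and
`T_{w⁻¹} T_s = T_{w⁻¹ s}`, and expanding `T_s T_{sw}` and `T_{w⁻¹ s} T_s` by the quadratic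
relation gives `F w + F (sw) = G w + G (sw)`. Hence `F - G` cancels on every orbit `{w, sw}`.
-/

open Equiv

section Length

variable {n : ℕ}

def IsAdjSwap (s : Perm (Fin n)) : Prop :=
  ∃ (i : Fin n) (h : (i : ℕ) + 1 < n), s = swap i ⟨(i : ℕ) + 1, h⟩

lemma fin_ne_succ_val (i : Fin n) (h : (i : ℕ) + 1 < n) : i ≠ ⟨(i : ℕ) + 1, h⟩ :=
  fun hi => by simpa using congrArg Fin.val hi

namespace IsAdjSwap

variable {s : Perm (Fin n)}

lemma ne_one (hs : IsAdjSwap s) : s ≠ 1 := by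
  obtain ⟨i, h, rfl⟩ := hs
  exact swap_eq_one_iff.not.mpr (fin_ne_succ_val i h)

lemma mul_self (hs : IsAdjSwap s) : s * s = 1 := by
  obtain ⟨i, h, rfl⟩ := hs
  exact swap_mul_self _ _

lemma inv_eq (hs : IsAdjSwap s) : s⁻¹ = s := by
  obtain ⟨i, h, rfl⟩ := hs
  exact swap_inv _ _

lemma sign_eq (hs : IsAdjSwap s) : Perm.sign s = -1 := by
  obtain ⟨i, h, rfl⟩ := hs
  exact Perm.sign_swap (fin_ne_succ_val i h)

end IsAdjSwap

lemma exists_isAdjSwap_word (w : Perm (Fin n)) :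
    ∃ l : List (Perm (Fin n)), (∀ s ∈ l, IsAdjSwap s) ∧ l.prod = w := by
  cases n with
  | zero => exact ⟨[], by simp, Subsingleton.elim _ _⟩
  | succ m =>
    have hw : w ∈ Submonoid.closure (Set.range fun i : Fin m ↦ swap i.castSucc i.succ) := by
      rw [Perm.mclosure_swap_castSucc_succ m]; trivial
    obtain ⟨l, hl, hprod⟩ := Submonoid.exists_list_of_mem_closure hw
    refine ⟨l, fun s hs => ?_, hprod⟩
    obtain ⟨i, rfl⟩ := hl s hs
    exact ⟨i.castSucc, by simp, rfl⟩

lemma permLength_le_length {w : Perm (Fin n)} {l : List (Perm (Fin n))}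
    (hl : ∀ s ∈ l, IsAdjSwap s) (hprod : l.prod = w) : permLength w ≤ l.length :=
  Nat.sInf_le ⟨l, rfl, hl, hprod⟩

lemma exists_word_length_eq_permLength (w : Perm (Fin n)) :
    ∃ l : List (Perm (Fin n)),
      l.length = permLength w ∧ (∀ s ∈ l, IsAdjSwap s) ∧ l.prod = w := by
  obtain ⟨l, hl, hprod⟩ := exists_isAdjSwap_word w
  exact Nat.sInf_mem (s := {k | ∃ l : List (Perm (Fin n)),
    l.length = k ∧ (∀ s ∈ l, IsAdjSwap s) ∧ l.prod = w}) ⟨l.length, l, rfl, hl, hprod⟩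

lemma IsAdjSwap.permLength_eq {s : Perm (Fin n)} (hs : IsAdjSwap s) : permLength s = 1 := by
  have hle : permLength s ≤ 1 := permLength_le_length (l := [s]) (by simpa using hs) (by simp)
  have hne : permLength s ≠ 0 := by
    intro h0
    obtain ⟨l, hlen, -, hprod⟩ := exists_word_length_eq_permLength s
    rw [h0, List.length_eq_zero_iff] at hlen
    exact hs.ne_one (by rw [← hprod, hlen, List.prod_nil])
  omega

lemma prod_reverse_of_isAdjSwap {l : List (Perm (Fin n))} (hl : ∀ s ∈ l, IsAdjSwap s) :
    l.reverse.prod = l.prod⁻¹ := by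
  rw [List.prod_inv_reverse, List.map_congr_left fun s hs => (hl s hs).inv_eq, List.map_id']

lemma permLength_inv_le (w : Perm (Fin n)) : permLength w⁻¹ ≤ permLength w := by
  obtain ⟨l, hlen, hl, hprod⟩ := exists_word_length_eq_permLength w
  rw [← hlen, ← List.length_reverse]
  exact permLength_le_length (fun s hs => hl s (List.mem_reverse.mp hs))
    (by rw [prod_reverse_of_isAdjSwap hl, hprod])

lemma permLength_inv (w : Perm (Fin n)) : permLength w⁻¹ = permLength w :=
  le_antisymm (permLength_inv_le w) (by simpa using permLength_inv_le w⁻¹)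

lemma sign_prod_of_isAdjSwap {l : List (Perm (Fin n))} (hl : ∀ s ∈ l, IsAdjSwap s) :
    Perm.sign l.prod = (-1) ^ l.length := by
  rw [← List.prod_hom, List.map_congr_left fun s hs => (hl s hs).sign_eq, List.map_const',
    List.prod_replicate]

lemma sign_eq_neg_one_pow_permLength (w : Perm (Fin n)) :
    Perm.sign w = (-1) ^ permLength w := by
  obtain ⟨l, hlen, hl, rfl⟩ := exists_word_length_eq_permLength w
  rw [sign_prod_of_isAdjSwap hl, hlen]

lemma IsAdjSwap.permLength_mul_le {s : Perm (Fin n)} (hs : IsAdjSwap s) (w : Perm (Fin n)) :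
    permLength (s * w) ≤ permLength w + 1 := by
  obtain ⟨l, hlen, hl, hprod⟩ := exists_word_length_eq_permLength w
  rw [← hlen, ← List.length_cons]
  exact permLength_le_length (l := s :: l) (by simpa [hs] using hl) (by rw [List.prod_cons, hprod])

lemma IsAdjSwap.permLength_mul_eq_or {s : Perm (Fin n)} (hs : IsAdjSwap s) (w : Perm (Fin n)) :
    permLength (s * w) = permLength w + 1 ∨ permLength w = permLength (s * w) + 1 := by
  have hup := hs.permLength_mul_le w
  have hdown : permLength w ≤ permLength (s * w) + 1 := by
    simpa [← mul_assoc, hs.mul_self] using hs.permLength_mul_le (s * w)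
  have hne : permLength (s * w) ≠ permLength w := by
    intro heq
    have hsign := Perm.sign_mul s w
    rw [hs.sign_eq, sign_eq_neg_one_pow_permLength, sign_eq_neg_one_pow_permLength, heq] at hsign
    rcases Int.units_eq_one_or ((-1 : ℤˣ) ^ permLength w) with h | h <;> simp [h] at hsign
  omega

end Length

section Casimir

variable {K H : Type*} [Field K] [Ring H] [Algebra K H] {n : ℕ}
  (T : Perm (Fin n) → H) (q : K) (s : Perm (Fin n))

noncomputable def casimirLeft (w : Perm (Fin n)) : H ⊗[K] H :=
  (q ^ permLength w)⁻¹ • ((T s * T w) ⊗ₜ[K] T w⁻¹)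

noncomputable def casimirRight (w : Perm (Fin n)) : H ⊗[K] H :=
  (q ^ permLength w)⁻¹ • (T w ⊗ₜ[K] (T w⁻¹ * T s))

variable {T q s}

lemma casimirLeft_pair_eq_of_permLength_mul_eq (hq : q ≠ 0)
    (hmul : ∀ w u : Perm (Fin n),
      permLength w + permLength u = permLength (w * u) → T w * T u = T (w * u))
    (hs : IsAdjSwap s) (hquad : T s * T s = (q - 1) • T s + q • (1 : H))
    {w : Perm (Fin n)} (hw : permLength (s * w) = permLength w + 1) :
    casimirLeft T q s w + casimirLeft T q s (s * w)
      = casimirRight T q s w + casimirRight T q s (s * w) := by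
  have hsw : T s * T w = T (s * w) := hmul s w (by rw [hs.permLength_eq, hw, add_comm])
  have hsw_inv : (s * w)⁻¹ = w⁻¹ * s := by rw [mul_inv_rev, hs.inv_eq]
  have hws : T w⁻¹ * T s = T (w⁻¹ * s) := hmul _ _ <| by
    rw [← hsw_inv, permLength_inv (s * w), hw, permLength_inv, hs.permLength_eq]
  have hs_sw : T s * T (s * w) = (q - 1) • T (s * w) + q • T w := by
    rw [← hsw, ← mul_assoc, hquad, add_mul, smul_mul_assoc, smul_mul_assoc, one_mul, hsw]
  have hws_s : T (w⁻¹ * s) * T s = (q - 1) • T (w⁻¹ * s) + q • T w⁻¹ := by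
    rw [← hws, mul_assoc, hquad, mul_add, mul_smul_comm, mul_smul_comm, mul_one, hws]
  have hpow : (q ^ permLength (s * w))⁻¹ = (q ^ permLength w)⁻¹ * q⁻¹ := by
    rw [hw, pow_succ, mul_inv]
  simp only [casimirLeft, casimirRight, hsw, hs_sw, hpow, hsw_inv, hws, hws_s,
    TensorProduct.add_tmul, TensorProduct.tmul_add, ← TensorProduct.smul_tmul',
    TensorProduct.tmul_smul, smul_add, smul_smul]
  match_scalars <;> field_simp

lemma casimirLeft_pair_eq (hq : q ≠ 0)
    (hmul : ∀ w u : Perm (Fin n),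
      permLength w + permLength u = permLength (w * u) → T w * T u = T (w * u))
    (hs : IsAdjSwap s) (hquad : T s * T s = (q - 1) • T s + q • (1 : H)) (w : Perm (Fin n)) :
    casimirLeft T q s w + casimirLeft T q s (s * w)
      = casimirRight T q s w + casimirRight T q s (s * w) := by
  rcases hs.permLength_mul_eq_or w with hup | hdown
  · exact casimirLeft_pair_eq_of_permLength_mul_eq hq hmul hs hquad hup
  · have hss : s * (s * w) = w := by rw [← mul_assoc, hs.mul_self, one_mul]
    have := casimirLeft_pair_eq_of_permLength_mul_eq hq hmul hs hquad (w := s * w)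
      (by rw [hss, hdown])
    rwa [hss, add_comm, add_comm (casimirRight T q s _)] at this

lemma sum_casimirLeft_eq_sum_casimirRight (hq : q ≠ 0)
    (hmul : ∀ w u : Perm (Fin n),
      permLength w + permLength u = permLength (w * u) → T w * T u = T (w * u))
    (hs : IsAdjSwap s) (hquad : T s * T s = (q - 1) • T s + q • (1 : H)) :
    ∑ w, casimirLeft T q s w = ∑ w, casimirRight T q s w := by
  rw [← sub_eq_zero, ← Finset.sum_sub_distrib]
  refine Finset.sum_ninvolution (s * ·) (fun w => ?_) (fun w _ => ?_) (fun _ => Finset.mem_univ _)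
    (fun w => by rw [← mul_assoc, hs.mul_self, one_mul])
  · rw [sub_add_sub_comm, casimirLeft_pair_eq hq hmul hs hquad, sub_self]
  · exact fun hsw => hs.ne_one (mul_eq_right.mp hsw)

end Casimir

theorem stmt5_general (K : Type*) [Field K] (n : ℕ) (q : K) (hq : q ≠ 0)
    (H : Type*) [Ring H] [Algebra K H]
    (T : Module.Basis (Equiv.Perm (Fin n)) K H)
    (hmul : ∀ w u : Equiv.Perm (Fin n),
      permLength w + permLength u = permLength (w * u) → T w * T u = T (w * u))
    (hquad : ∀ (i : Fin n) (h : (i : ℕ) + 1 < n),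
      T (Equiv.swap i ⟨(i : ℕ) + 1, h⟩) * T (Equiv.swap i ⟨(i : ℕ) + 1, h⟩)
        = (q - 1) • T (Equiv.swap i ⟨(i : ℕ) + 1, h⟩) + q • (1 : H)) :
    ∀ (i : Fin n) (h : (i : ℕ) + 1 < n),
      ∑ w : Equiv.Perm (Fin n), (q ^ permLength w)⁻¹ •
          ((T (Equiv.swap i ⟨(i : ℕ) + 1, h⟩) * T w) ⊗ₜ[K] T w⁻¹)
        = ∑ w : Equiv.Perm (Fin n), (q ^ permLength w)⁻¹ •
          (T w ⊗ₜ[K] (T w⁻¹ * T (Equiv.swap i ⟨(i : ℕ) + 1, h⟩))) :=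
  fun i h => sum_casimirLeft_eq_sum_casimirRight hq hmul ⟨i, h, rfl⟩ (hquad i h)

/-- The Casimir element `Σ_w q^{-l(w)} T_w ⊗ T_{w⁻¹}` of the Hecke algebra is
central: for each generator `T_i = T_{(i,i+1)}`,
`Σ_w q^{-l(w)} T_i T_w ⊗ T_{w⁻¹} = Σ_w q^{-l(w)} T_w ⊗ T_{w⁻¹} T_i`. -/
theorem stmt5 (K : Type*) [Field K] [CharZero K] (n : ℕ) (q : K) (hq : q ≠ 0)
    (hroot : ∀ m : ℕ, 1 < m → q ^ m ≠ 1)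
    (H : Type*) [Ring H] [Algebra K H]
    (T : Module.Basis (Equiv.Perm (Fin n)) K H)
    (hone : T 1 = 1)
    (hmul : ∀ w u : Equiv.Perm (Fin n),
      permLength w + permLength u = permLength (w * u) → T w * T u = T (w * u))
    (hquad : ∀ (i : Fin n) (h : (i : ℕ) + 1 < n),
      T (Equiv.swap i ⟨(i : ℕ) + 1, h⟩) * T (Equiv.swap i ⟨(i : ℕ) + 1, h⟩)
        = (q - 1) • T (Equiv.swap i ⟨(i : ℕ) + 1, h⟩) + q • (1 : H)) :
    ∀ (i : Fin n) (h : (i : ℕ) + 1 < n),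
      ∑ w : Equiv.Perm (Fin n), (q ^ permLength w)⁻¹ •
          ((T (Equiv.swap i ⟨(i : ℕ) + 1, h⟩) * T w) ⊗ₜ[K] T w⁻¹)
        = ∑ w : Equiv.Perm (Fin n), (q ^ permLength w)⁻¹ •
          (T w ⊗ₜ[K] (T w⁻¹ * T (Equiv.swap i ⟨(i : ℕ) + 1, h⟩))) :=
  stmt5_general K n q hq H T hmul hquad
end

section
/- Let λ be a partition, let σ = (σ_1,...,σ_r) be a partition and let σ' be its conjugate. If β_k(λ) ≥ β_k(σ') for all k, then there exists a partition γ ⊆ λ with |λ| - |γ| = σ_r, such that λ_i - γ_i ≤ 1 for all i, and β_k(γ) ≥ β_k((σ_1,...,σ_{r-1})') for all k. -/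
/-- The conjugate of a partition given as a weakly decreasing function
`f : ℕ → ℕ` (0-indexed parts): `conjF f j` is the number of rows `i` with
`f i > j`, i.e. the length of the `j`-th column. -/
noncomputable def conjF (f : ℕ → ℕ) (j : ℕ) : ℕ :=
  Nat.card {i : ℕ | j < f i}

/-- `betaF k f = β_k(f)`: the number of boxes in the first `k` columns of the
partition `f`, i.e. `f'_1 + ⋯ + f'_k`. -/
noncomputable def betaF (k : ℕ) (f : ℕ → ℕ) : ℕ :=
  ∑ j ∈ Finset.range k, conjF f j

/-- The number of boxes of the partition `f`. -/
noncomputable def sizeF (f : ℕ → ℕ) : ℕ :=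
  Nat.card {p : ℕ × ℕ // p.2 < f p.1}

lemma conjF_eq_card (f : ℕ → ℕ) {N : ℕ} (hN : ∀ i, N ≤ i → f i = 0) (j : ℕ) :
    conjF f j = ((Finset.range N).filter fun i => j < f i).card := by
  have hset : {i : ℕ | j < f i} = ↑((Finset.range N).filter fun i => j < f i) := by
    ext i
    simp only [Set.mem_setOf_eq, Finset.coe_filter, Finset.mem_range, Set.mem_setOf_eq]
    constructor
    · intro hh
      refine ⟨?_, hh⟩
      by_contra hc
      push_neg at hc
      have := hN i hc
      omega
    · exact fun hh => hh.2
  rw [conjF, hset, Nat.card_coe_set_eq, Set.ncard_coe_finset]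

lemma conjF_le (f : ℕ → ℕ) {N : ℕ} (hN : ∀ i, N ≤ i → f i = 0) (j : ℕ) :
    conjF f j ≤ N := by
  rw [conjF_eq_card f hN j]
  calc ((Finset.range N).filter fun i => j < f i).card ≤ (Finset.range N).card :=
        Finset.card_filter_le _ _
    _ = N := Finset.card_range N

lemma lt_conjF_iff (f : ℕ → ℕ) (hf : Antitone f) {N : ℕ} (hN : ∀ i, N ≤ i → f i = 0)
    (i j : ℕ) : i < conjF f j ↔ j < f i := by
  rw [conjF_eq_card f hN j]
  constructor
  · intro hlt
    by_contra hc
    push_neg at hc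
    have hsub : ((Finset.range N).filter fun i => j < f i) ⊆ Finset.range i := by
      intro b hb
      simp only [Finset.mem_filter, Finset.mem_range] at hb ⊢
      by_contra hbi
      push_neg at hbi
      have := hf hbi
      omega
    have := Finset.card_le_card hsub
    rw [Finset.card_range] at this
    omega
  · intro hlt
    have hsub : Finset.range (i+1) ⊆ (Finset.range N).filter fun i => j < f i := by
      intro a ha
      simp only [Finset.mem_range] at ha
      have hai : a ≤ i := by omega
      have hfa : f i ≤ f a := hf hai
      simp only [Finset.mem_filter, Finset.mem_range]
      refine ⟨?_, by omega⟩
      by_contra hc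
      push_neg at hc
      have := hN a hc
      omega
    have := Finset.card_le_card hsub
    rw [Finset.card_range] at this
    omega

lemma conjF_anti (f : ℕ → ℕ) {N : ℕ} (hN : ∀ i, N ≤ i → f i = 0) : Antitone (conjF f) := by
  intro a b hab
  rw [conjF_eq_card f hN a, conjF_eq_card f hN b]
  apply Finset.card_le_card
  intro x hx
  simp only [Finset.mem_filter] at hx ⊢
  exact ⟨hx.1, by omega⟩

lemma conjF_bound (f : ℕ → ℕ) (hf : Antitone f) {N : ℕ} (hN : ∀ i, N ≤ i → f i = 0) :
    ∀ j, f 0 ≤ j → conjF f j = 0 := by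
  intro j hj
  rw [conjF_eq_card f hN j, Finset.card_eq_zero, Finset.filter_eq_empty_iff]
  intro i _
  have : f i ≤ f 0 := hf (Nat.zero_le i)
  omega

lemma conjF_conjF (f : ℕ → ℕ) (hf : Antitone f) {N : ℕ} (hN : ∀ i, N ≤ i → f i = 0) :
    ∀ i, conjF (conjF f) i = f i := by
  intro i
  have hca := conjF_anti f hN
  have hcb := conjF_bound f hf hN
  have H1 : ∀ n, n < conjF (conjF f) i ↔ i < conjF f n :=
    fun n => lt_conjF_iff (conjF f) hca hcb n i
  have H2 : ∀ n, i < conjF f n ↔ n < f i := fun n => lt_conjF_iff f hf hN i n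
  have h1 := (H1 (f i)).trans (H2 (f i))
  have h2 := (H1 (conjF (conjF f) i)).trans (H2 (conjF (conjF f) i))
  omega

lemma conjF_mono {f f' : ℕ → ℕ} {N : ℕ} (hN : ∀ i, N ≤ i → f i = 0)
    (hN' : ∀ i, N ≤ i → f' i = 0) (hle : ∀ i, f i ≤ f' i) (j : ℕ) :
    conjF f j ≤ conjF f' j := by
  rw [conjF_eq_card f hN j, conjF_eq_card f' hN' j]
  apply Finset.card_le_card
  intro x hx
  simp only [Finset.mem_filter] at hx ⊢
  exact ⟨hx.1, lt_of_lt_of_le hx.2 (hle x)⟩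

lemma sum_conjF_eq (f : ℕ → ℕ) {N : ℕ} (hN : ∀ i, N ≤ i → f i = 0) (k : ℕ) :
    ∑ j ∈ Finset.range k, conjF f j = ∑ i ∈ Finset.range N, min (f i) k := by
  calc ∑ j ∈ Finset.range k, conjF f j
      = ∑ j ∈ Finset.range k, ((Finset.range N).filter fun i => j < f i).card :=
        Finset.sum_congr rfl fun j _ => conjF_eq_card f hN j
    _ = ∑ j ∈ Finset.range k, ∑ i ∈ Finset.range N, if j < f i then 1 else 0 :=
        Finset.sum_congr rfl fun j _ => Finset.card_filter _ _
    _ = ∑ i ∈ Finset.range N, ∑ j ∈ Finset.range k, if j < f i then 1 else 0 :=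
        Finset.sum_comm
    _ = ∑ i ∈ Finset.range N, min (f i) k := by
        refine Finset.sum_congr rfl fun i _ => ?_
        rw [← Finset.card_filter]
        have : (Finset.range k).filter (fun j => j < f i) = Finset.range (min (f i) k) := by
          ext j
          simp only [Finset.mem_filter, Finset.mem_range, Nat.lt_min]
          omega
        rw [this, Finset.card_range]

lemma sizeF_eq (f : ℕ → ℕ) {N : ℕ} (hN : ∀ i, N ≤ i → f i = 0) :
    sizeF f = ∑ i ∈ Finset.range N, f i := by
  classical
  set S : Finset (ℕ × ℕ) :=
    (Finset.range N).biUnion (fun i => (Finset.range (f i)).image fun j => (i, j)) with hS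
  have hmem : ∀ p : ℕ × ℕ, p ∈ S ↔ p.2 < f p.1 := by
    intro p
    simp only [hS, Finset.mem_biUnion, Finset.mem_image, Finset.mem_range]
    constructor
    · rintro ⟨i, hi, j, hj, rfl⟩
      exact hj
    · intro hp
      refine ⟨p.1, ?_, p.2, hp, rfl⟩
      by_contra hc
      push_neg at hc
      have := hN _ hc
      omega
  have hset : {p : ℕ × ℕ | p.2 < f p.1} = ↑S := by
    ext p
    simp [hmem p]
  have h1 : sizeF f = S.card := by
    rw [sizeF]
    rw [show {p : ℕ × ℕ // p.2 < f p.1} = ↥{p : ℕ × ℕ | p.2 < f p.1} from rfl]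
    rw [Nat.card_coe_set_eq, hset, Set.ncard_coe_finset]
  rw [h1, hS, Finset.card_biUnion]
  · refine Finset.sum_congr rfl fun i _ => ?_
    rw [Finset.card_image_of_injective _ (fun a b hab => by
      simpa using congrArg Prod.snd hab), Finset.card_range]
  · intro x hx y hy hxy
    rw [Function.onFun, Finset.disjoint_left]
    rintro a ha hb
    simp only [Finset.mem_image, Finset.mem_range] at ha hb
    obtain ⟨j1, _, rfl⟩ := ha
    obtain ⟨j2, _, hb2⟩ := hb
    exact hxy (by simpa using congrArg Prod.fst hb2.symm)

/-- If `λ ≥ σ'` in the column-count order `β`, where `σ` has exactly `r ≥ 1`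
nonzero parts and `σ_* = (σ_1, …, σ_{r-1})`, then there is a partition `γ ⊆ λ`
with `λ/γ` a vertical strip of size `σ_r` (i.e. `λ_i - γ_i ≤ 1` for all `i` and
`|λ| = |γ| + σ_r`) such that `γ ≥ σ_*'`. -/
theorem stmt12 (σ lam : ℕ → ℕ) (r : ℕ) (hr : 1 ≤ r)
    (hσa : Antitone σ) (hσr : ∀ i, σ i ≠ 0 ↔ i < r)
    (hla : Antitone lam) (hlf : ∃ N : ℕ, ∀ i, N ≤ i → lam i = 0)
    (h : ∀ k : ℕ, betaF k (conjF σ) ≤ betaF k lam) :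
    ∃ γ : ℕ → ℕ, Antitone γ ∧ (∀ i, γ i ≤ lam i) ∧ (∀ i, lam i ≤ γ i + 1) ∧
      sizeF lam = sizeF γ + σ (r - 1) ∧
      ∀ k : ℕ, betaF k (conjF (fun i => if i < r - 1 then σ i else 0)) ≤ betaF k γ := by
  obtain ⟨N, hN⟩ := hlf
  have hσ0 : ∀ i, r ≤ i → σ i = 0 := by
    intro i hi
    by_contra hh
    have := (hσr i).mp hh
    omega
  set s := σ (r - 1) with hs_def
  set L := conjF lam with hL_def
  have hLanti : Antitone L := conjF_anti lam hN
  have hLbound : ∀ j, lam 0 ≤ j → L j = 0 := conjF_bound lam hla hN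
  set g : ℕ → ℕ := fun j => (L j - s) + min (L (j+1)) s with hg_def
  have hLsucc : ∀ j : ℕ, L (j+1) ≤ L j := fun j => hLanti (by omega)
  have hganti : Antitone g := by
    apply antitone_nat_of_succ_le
    intro j
    have h1 := hLsucc j
    have h2 := hLsucc (j+1)
    simp only [hg_def]
    omega
  have hgbound : ∀ j, lam 0 ≤ j → g j = 0 := by
    intro j hj
    have h1 : L j = 0 := hLbound j hj
    have h2 : L (j+1) = 0 := hLbound (j+1) (by omega)
    simp only [hg_def]
    omega
  have hgleL : ∀ j, g j ≤ L j := by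
    intro j
    have := hLsucc j
    simp only [hg_def]
    omega
  have hLleg : ∀ j, L (j+1) ≤ g j := by
    intro j
    have := hLsucc j
    simp only [hg_def]
    omega
  -- rewrite hypothesis h
  have hbL : ∀ k, betaF k lam = ∑ j ∈ Finset.range k, L j := fun k => rfl
  have hσsum : ∀ k, betaF k (conjF σ) = ∑ j ∈ Finset.range k, σ j := by
    intro k
    exact Finset.sum_congr rfl fun j _ => conjF_conjF σ hσa hσ0 j
  have h' : ∀ k, (∑ j ∈ Finset.range k, σ j) ≤ ∑ j ∈ Finset.range k, L j := by
    intro k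
    have := h k
    rwa [hσsum, hbL] at this
  have hsL0 : s ≤ L 0 := by
    have h1 := h' 1
    simp only [Finset.sum_range_one] at h1
    have h2 : s ≤ σ 0 := hσa (Nat.zero_le _)
    omega
  -- telescoping identity
  have T : ∀ k, (∑ j ∈ Finset.range k, L j) + min (L k) s
      = (∑ j ∈ Finset.range k, g j) + min (L 0) s := by
    intro k
    induction k with
    | zero => simp
    | succ k ih =>
      rw [Finset.sum_range_succ, Finset.sum_range_succ]
      have hg : g k = (L k - s) + min (L (k+1)) s := by simp only [hg_def]
      have h1 := hLsucc k
      omega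
  set γ := conjF g with hγ_def
  have hγanti : Antitone γ := conjF_anti g hgbound
  have hγle : ∀ i, γ i ≤ lam i := by
    intro i
    have : lam i = conjF L i := (conjF_conjF lam hla hN i).symm
    rw [this]
    exact conjF_mono hgbound hLbound hgleL i
  have hγ1 : ∀ i, lam i ≤ γ i + 1 := by
    intro i
    rcases Nat.lt_or_ge (lam i) 2 with h2 | h2
    · omega
    · have hi1 : i < L (lam i - 1) :=
        (lt_conjF_iff lam hla hN i (lam i - 1)).mpr (by omega)
      have hgge : L (lam i - 1) ≤ g (lam i - 2) := by
        have := hLleg (lam i - 2)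
        have he : lam i - 2 + 1 = lam i - 1 := by omega
        rwa [he] at this
      have hlt : lam i - 2 < γ i :=
        (lt_conjF_iff g hganti hgbound (lam i - 2) i).mpr (lt_of_lt_of_le hi1 hgge)
      omega
  have hγboundN : ∀ i, N ≤ i → γ i = 0 := by
    intro i hi
    have := hγle i
    have := hN i hi
    omega
  -- sizes
  have hsize_lam : sizeF lam = ∑ j ∈ Finset.range (lam 0), L j := by
    rw [sizeF_eq lam hN]
    have := sum_conjF_eq lam hN (lam 0)
    rw [hL_def]
    rw [this]
    refine Finset.sum_congr rfl fun i _ => ?_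
    have : lam i ≤ lam 0 := hla (Nat.zero_le i)
    omega
  have hsize_γ : sizeF γ = ∑ j ∈ Finset.range (lam 0), g j := by
    rw [sizeF_eq γ hγboundN]
    have h1 := sum_conjF_eq g hgbound N
    have h2 : ∑ i ∈ Finset.range N, γ i = ∑ j ∈ Finset.range N, conjF g j := rfl
    rw [h2, h1]
    refine Finset.sum_congr rfl fun j _ => ?_
    have : g j ≤ L j := hgleL j
    have : L j ≤ N := conjF_le lam hN j
    omega
  have hsize : sizeF lam = sizeF γ + s := by
    have hT := T (lam 0)
    have hLM : L (lam 0) = 0 := hLbound (lam 0) le_rfl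
    rw [hsize_lam, hsize_γ]
    omega
  refine ⟨γ, hγanti, hγle, hγ1, hsize, ?_⟩
  -- beta inequality
  intro k
  set σs : ℕ → ℕ := fun i => if i < r - 1 then σ i else 0 with hσs_def
  have hσsanti : Antitone σs := by
    intro a b hab
    simp only [hσs_def]
    by_cases hb : b < r - 1
    · rw [if_pos hb, if_pos (by omega)]
      exact hσa hab
    · rw [if_neg hb]
      exact Nat.zero_le _
  have hσsbound : ∀ i, r - 1 ≤ i → σs i = 0 := by
    intro i hi
    simp only [hσs_def]
    rw [if_neg (by omega)]
  have hβσs : betaF k (conjF σs) = ∑ j ∈ Finset.range k, σs j :=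
    Finset.sum_congr rfl fun j _ => conjF_conjF σs hσsanti hσsbound j
  have hβγ : betaF k γ = ∑ j ∈ Finset.range k, g j :=
    Finset.sum_congr rfl fun j _ => conjF_conjF g hganti hgbound j
  rw [hβσs, hβγ]
  have hT := T k
  rcases Nat.lt_or_ge k r with hk | hk
  · -- k < r
    have e1 : ∑ j ∈ Finset.range k, σs j = ∑ j ∈ Finset.range k, σ j := by
      refine Finset.sum_congr rfl fun j hj => ?_
      simp only [Finset.mem_range] at hj
      simp only [hσs_def]
      rw [if_pos (by omega)]
    have hk1 := h' (k+1)
    have hk0 := h' k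
    rw [Finset.sum_range_succ, Finset.sum_range_succ] at hk1
    have hσk : s ≤ σ k := hσa (by omega)
    rw [e1]
    omega
  · -- r ≤ k
    have e1 : ∑ j ∈ Finset.range k, σs j = ∑ j ∈ Finset.range (r-1), σ j := by
      rw [← Finset.sum_subset (Finset.range_subset_range.mpr (by omega : r - 1 ≤ k))
        (fun x _ hx => by
          simp only [Finset.mem_range] at hx
          exact hσsbound x (by omega))]
      exact Finset.sum_congr rfl fun j hj => by
        simp only [Finset.mem_range] at hj
        simp only [hσs_def]
        rw [if_pos (by omega)]
    have e2 : ∑ j ∈ Finset.range k, σ j = (∑ j ∈ Finset.range (r-1), σ j) + s := by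
      have ha : ∑ j ∈ Finset.range k, σ j = ∑ j ∈ Finset.range r, σ j :=
        (Finset.sum_subset (Finset.range_subset_range.mpr hk)
          (fun x _ hx => by
            simp only [Finset.mem_range] at hx
            exact hσ0 x (by omega))).symm
      have hb : r = (r - 1) + 1 := by omega
      rw [ha, hb, Finset.sum_range_succ, hs_def]
      simp
    have hk0 := h' k
    rw [e1]
    omega
end
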